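/- There exists R* with 0 < R* ≤ (1/2)·√(3/(4π)) such that for every R with 0 < R < R*, the map T is a contraction on C_R^0 with contraction constant 3/4: for all (m̃₁,ρ̃₁), (m̃₂,ρ̃₂) ∈ C_R^0 one has ‖T[m̃₁,ρ̃₁] − T[m̃₂,ρ̃₂]‖ ≤ (3/4)·‖(m̃₁−m̃₂, ρ̃₁−ρ̃₂)‖. -/

import Mathlib

open Real Set

noncomputable section

/-- `ρ₀(R) = (16π/3)R²`. -/
def rho0R (R : ℝ) : ℝ := 16 * π / 3 * R ^ 2

/-- Membership in the set `C_R^0`. -/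
def memC (R : ℝ) (m ρ : ℝ → ℝ) : Prop :=
  ContinuousOn m (Icc 0 R) ∧ ContinuousOn ρ (Icc 0 R) ∧
  ∀ r ∈ Icc (0:ℝ) R,
    0 ≤ m r ∧ m r ≤ 4 * π / 3 * rho0R R * r ^ 3 ∧ 0 ≤ ρ r ∧ ρ r ≤ rho0R R

/-- `M[ρ̃](r) = ∫₀^r 4πs²ρ̃(s) ds`. -/
def Mop (ρ : ℝ → ℝ) (r : ℝ) : ℝ := ∫ s in (0:ℝ)..r, 4 * π * s ^ 2 * ρ s

/-- `P[m̃,ρ̃](r)`. -/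
def Pop (R : ℝ) (m ρ : ℝ → ℝ) (r : ℝ) : ℝ :=
  ∫ s in r..R, (1 + 2 * ρ s) / (1 - 8 * π / 3 * s ^ 2 - 2 * m s / s) *
    (4 * π * s / 3) * (1 + 3 * ρ s + 3 * m s / (4 * π * s ^ 3))

/-- The norm `‖(m,ρ)‖ = (3/(4π))·sup_{(0,R]} |m/r³| + 2·sup_{[0,R]} |ρ|`. -/
def normCR (R : ℝ) (m ρ : ℝ → ℝ) : ℝ :=
  3 / (4 * π) * sSup ((fun r => |m r / r ^ 3|) '' Ioc 0 R) +
    2 * sSup ((fun r => |ρ r|) '' Icc 0 R)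

/-!
Write `a = m(s) / s³` for the mean density. For `R ≤ 1/100` the integrand of `P` is a rational
function of `(s, a, ρ)` whose denominator stays above `1/2`, so it is `120 s`-Lipschitz in `(a, ρ)`
on the admissible region; integrating over `[r, R]` makes the `ρ`-component of `T` Lipschitz with
constant `O(R²)`. The `m`-component is exactly balanced by the weight of the norm:
`|M[ρ₁](r) - M[ρ₂](r)| ≤ (4π/3) r³ sup |ρ₁ - ρ₂|`, so it contributes at most `sup |ρ₁ - ρ₂|`,
half of the `2 sup |ρ|` term, and `R* = 1/100` leaves room for the `O(R²)` part.
-/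

open MeasureTheory

lemma abs_mul_sub_mul_le {x₁ x₂ y₁ y₂ X Y δx δy : ℝ} (hx : |x₁ - x₂| ≤ δx) (hy : |y₁ - y₂| ≤ δy)
    (hx₂ : |x₂| ≤ X) (hy₁ : |y₁| ≤ Y) :
    |x₁ * y₁ - x₂ * y₂| ≤ δx * Y + X * δy := by
  calc |x₁ * y₁ - x₂ * y₂| = |(x₁ - x₂) * y₁ + x₂ * (y₁ - y₂)| := by ring_nf
    _ ≤ |x₁ - x₂| * |y₁| + |x₂| * |y₁ - y₂| := by
      rw [← abs_mul, ← abs_mul]; exact abs_add_le _ _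
    _ ≤ δx * Y + X * δy := by
      gcongr
      · exact (abs_nonneg _).trans hx
      · exact (abs_nonneg _).trans hx₂

lemma abs_div_sub_div_le {x₁ x₂ y₁ y₂ c : ℝ} (hc : 0 < c) (hy₁ : c ≤ y₁) (hy₂ : c ≤ y₂) :
    |x₁ / y₁ - x₂ / y₂| ≤ |x₁ - x₂| / c + |x₂| * |y₁ - y₂| / c ^ 2 := by
  have hy₁0 : 0 < y₁ := hc.trans_le hy₁
  have hy₂0 : 0 < y₂ := hc.trans_le hy₂
  calc |x₁ / y₁ - x₂ / y₂| = |(x₁ - x₂) / y₁ + x₂ * (y₂ - y₁) / (y₁ * y₂)| := by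
        congr 1; field_simp; ring
    _ ≤ |x₁ - x₂| / y₁ + |x₂| * |y₁ - y₂| / (y₁ * y₂) := by
      refine (abs_add_le _ _).trans_eq ?_
      rw [abs_div, abs_div, abs_mul, abs_sub_comm y₂, abs_of_pos hy₁0,
        abs_of_pos (mul_pos hy₁0 hy₂0)]
    _ ≤ |x₁ - x₂| / c + |x₂| * |y₁ - y₂| / c ^ 2 := by
      gcongr; rw [sq]; gcongr

def pQuotient (s a ρ : ℝ) : ℝ := (1 + 2 * ρ) / (1 - 8 * π / 3 * s ^ 2 - 2 * a * s ^ 2)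

def pAffine (a ρ : ℝ) : ℝ := 1 + 3 * ρ + 3 * a / (4 * π)

def pIntegrand (s a ρ : ℝ) : ℝ := pQuotient s a ρ * (4 * π * s / 3) * pAffine a ρ

lemma Pop_eq_integral_pIntegrand (R : ℝ) (m ρ : ℝ → ℝ) (r : ℝ) :
    Pop R m ρ r = ∫ s in r..R, pIntegrand s (m s / s ^ 3) (ρ s) := by
  unfold Pop pIntegrand pQuotient pAffine
  congr 1 with s
  rcases eq_or_ne s 0 with rfl | hs
  · simp
  · field_simp

section Integrand

variable {s a a₁ a₂ ρ ρ₁ ρ₂ : ℝ}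

lemma half_le_pQuotient_denom (hs : s ∈ Icc (0 : ℝ) (1 / 100)) (ha : a ∈ Icc (0 : ℝ) (1 / 10)) :
    1 / 2 ≤ 1 - 8 * π / 3 * s ^ 2 - 2 * a * s ^ 2 := by
  have hs2 : s ^ 2 ≤ 1 / 100 ^ 2 := by nlinarith [hs.1, hs.2]
  nlinarith [pi_le_four, ha.1, ha.2, sq_nonneg s]

lemma abs_pQuotient_le (hs : s ∈ Icc (0 : ℝ) (1 / 100)) (ha : a ∈ Icc (0 : ℝ) (1 / 10))
    (hρ : ρ ∈ Icc (0 : ℝ) (1 / 100)) : |pQuotient s a ρ| ≤ 3 := by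
  have hD := half_le_pQuotient_denom hs ha
  rw [pQuotient, abs_div, abs_of_pos (by linarith [hρ.1]), abs_of_pos (by linarith),
    div_le_iff₀ (by linarith)]
  linarith [hρ.2]

lemma abs_pQuotient_sub_le (hs : s ∈ Icc (0 : ℝ) (1 / 100)) (ha₁ : a₁ ∈ Icc (0 : ℝ) (1 / 10))
    (ha₂ : a₂ ∈ Icc (0 : ℝ) (1 / 10)) (hρ₂ : ρ₂ ∈ Icc (0 : ℝ) (1 / 100)) :
    |pQuotient s a₁ ρ₁ - pQuotient s a₂ ρ₂| ≤ 4 * |ρ₁ - ρ₂| + |a₁ - a₂| := by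
  refine (abs_div_sub_div_le (by norm_num) (half_le_pQuotient_denom hs ha₁)
    (half_le_pQuotient_denom hs ha₂)).trans ?_
  have hs2 : s ^ 2 ≤ 1 / 100 ^ 2 := by nlinarith [hs.1, hs.2]
  have hρ : |1 + 2 * ρ₂| ≤ 2 := by rw [abs_le]; constructor <;> linarith [hρ₂.1, hρ₂.2]
  rw [show 1 + 2 * ρ₁ - (1 + 2 * ρ₂) = 2 * (ρ₁ - ρ₂) by ring,
    show (1 - 8 * π / 3 * s ^ 2 - 2 * a₁ * s ^ 2) - (1 - 8 * π / 3 * s ^ 2 - 2 * a₂ * s ^ 2)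
      = -(2 * s ^ 2 * (a₁ - a₂)) by ring,
    abs_neg, abs_mul, abs_mul, abs_two, abs_of_nonneg (by positivity : (0 : ℝ) ≤ 2 * s ^ 2)]
  have hΔa := abs_nonneg (a₁ - a₂)
  have key : |1 + 2 * ρ₂| * (2 * s ^ 2 * |a₁ - a₂|) ≤ |a₁ - a₂| / 4 := by
    nlinarith [mul_le_mul hρ (mul_le_mul_of_nonneg_right hs2 hΔa) (by positivity) (by norm_num)]
  simp only [one_div, inv_pow, div_inv_eq_mul]
  linarith

lemma abs_pAffine_le (ha : a ∈ Icc (0 : ℝ) (1 / 10)) (hρ : ρ ∈ Icc (0 : ℝ) (1 / 100)) :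
    |pAffine a ρ| ≤ 2 := by
  have h0 : 0 ≤ 3 * a / (4 * π) := div_nonneg (by linarith [ha.1]) (by positivity)
  have h1 : 3 * a / (4 * π) ≤ 3 * a := div_le_self (by linarith [ha.1]) (by linarith [pi_gt_three])
  rw [pAffine, abs_of_nonneg (by linarith [hρ.1])]
  linarith [ha.2, hρ.2]

lemma abs_pAffine_sub_le : |pAffine a₁ ρ₁ - pAffine a₂ ρ₂| ≤ 3 * |ρ₁ - ρ₂| + |a₁ - a₂| := by
  rw [pAffine, pAffine, show 1 + 3 * ρ₁ + 3 * a₁ / (4 * π) - (1 + 3 * ρ₂ + 3 * a₂ / (4 * π))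
    = 3 * (ρ₁ - ρ₂) + 3 / (4 * π) * (a₁ - a₂) by ring]
  refine (abs_add_le _ _).trans ?_
  have h : 3 / (4 * π) ≤ 1 := (div_le_one (by positivity)).2 (by linarith [pi_gt_three])
  rw [abs_mul, abs_mul, abs_of_pos (by norm_num : (0 : ℝ) < 3),
    abs_of_pos (by positivity : (0 : ℝ) < 3 / (4 * π))]
  gcongr
  exact mul_le_of_le_one_left (abs_nonneg _) h

lemma abs_pIntegrand_le (hs : s ∈ Icc (0 : ℝ) (1 / 100)) (ha : a ∈ Icc (0 : ℝ) (1 / 10))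
    (hρ : ρ ∈ Icc (0 : ℝ) (1 / 100)) : |pIntegrand s a ρ| ≤ 32 * s := by
  have hB : |4 * π * s / 3| ≤ 16 / 3 * s := by
    rw [abs_of_nonneg (by have := hs.1; positivity)]; nlinarith [pi_le_four, hs.1]
  rw [pIntegrand, abs_mul, abs_mul]
  calc _ ≤ 3 * (16 / 3 * s) * 2 :=
        mul_le_mul (mul_le_mul (abs_pQuotient_le hs ha hρ) hB (abs_nonneg _) (by norm_num))
          (abs_pAffine_le ha hρ) (abs_nonneg _) (by nlinarith [hs.1])
    _ = 32 * s := by ring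

lemma abs_pIntegrand_sub_le (hs : s ∈ Icc (0 : ℝ) (1 / 100)) (ha₁ : a₁ ∈ Icc (0 : ℝ) (1 / 10))
    (ha₂ : a₂ ∈ Icc (0 : ℝ) (1 / 10)) (hρ₁ : ρ₁ ∈ Icc (0 : ℝ) (1 / 100))
    (hρ₂ : ρ₂ ∈ Icc (0 : ℝ) (1 / 100)) :
    |pIntegrand s a₁ ρ₁ - pIntegrand s a₂ ρ₂| ≤ 120 * s * (|a₁ - a₂| + |ρ₁ - ρ₂|) := by
  have hQA := abs_mul_sub_mul_le (abs_pQuotient_sub_le (ρ₁ := ρ₁) hs ha₁ ha₂ hρ₂)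
    (abs_pAffine_sub_le (a₂ := a₂) (ρ₂ := ρ₂)) (abs_pQuotient_le hs ha₂ hρ₂) (abs_pAffine_le ha₁ hρ₁)
  have hB : |4 * π * s / 3| ≤ 6 * s := by
    rw [abs_of_nonneg (by have := hs.1; positivity)]; nlinarith [pi_le_four, hs.1]
  calc |pIntegrand s a₁ ρ₁ - pIntegrand s a₂ ρ₂|
      = |pQuotient s a₁ ρ₁ * pAffine a₁ ρ₁ - pQuotient s a₂ ρ₂ * pAffine a₂ ρ₂| *
          |4 * π * s / 3| := by
        rw [← abs_mul]; unfold pIntegrand; ring_nf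
    _ ≤ ((4 * |ρ₁ - ρ₂| + |a₁ - a₂|) * 2 + 3 * (3 * |ρ₁ - ρ₂| + |a₁ - a₂|)) * (6 * s) := by
        gcongr
    _ ≤ 120 * s * (|a₁ - a₂| + |ρ₁ - ρ₂|) := by
        nlinarith [abs_nonneg (a₁ - a₂), abs_nonneg (ρ₁ - ρ₂), hs.1]

end Integrand

lemma abs_Mop_le {ρ : ℝ → ℝ} {r δ : ℝ} (hr : 0 ≤ r) (hρ : ∀ s ∈ Ioc 0 r, |ρ s| ≤ δ) :
    |Mop ρ r| ≤ 4 * π / 3 * δ * r ^ 3 := by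
  have hbound : ∀ s ∈ Ioc 0 r, ‖4 * π * s ^ 2 * ρ s‖ ≤ 4 * π * δ * s ^ 2 := fun s hs => by
    rw [Real.norm_eq_abs, abs_mul, abs_of_nonneg (by positivity : 0 ≤ 4 * π * s ^ 2)]
    nlinarith [hρ s hs, (by positivity : 0 ≤ 4 * π * s ^ 2)]
  calc |Mop ρ r| ≤ ∫ s in (0 : ℝ)..r, 4 * π * δ * s ^ 2 :=
        intervalIntegral.norm_integral_le_of_norm_le hr (ae_of_all _ hbound)
          (by apply Continuous.intervalIntegrable; fun_prop)
    _ = 4 * π / 3 * δ * r ^ 3 := by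
        rw [intervalIntegral.integral_const_mul, integral_pow]; ring

lemma Mop_sub_Mop {ρ₁ ρ₂ : ℝ → ℝ} {r : ℝ} (h₁ : ContinuousOn ρ₁ (uIcc 0 r))
    (h₂ : ContinuousOn ρ₂ (uIcc 0 r)) :
    Mop ρ₁ r - Mop ρ₂ r = Mop (fun s => ρ₁ s - ρ₂ s) r := by
  have hi : ∀ {ρ : ℝ → ℝ}, ContinuousOn ρ (uIcc 0 r) →
      IntervalIntegrable (fun s => 4 * π * s ^ 2 * ρ s) volume 0 r := fun h =>
    ((continuousOn_const.mul (by fun_prop)).mul h).intervalIntegrable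
  unfold Mop
  rw [← intervalIntegral.integral_sub (hi h₁) (hi h₂)]
  simp only [mul_sub]

lemma abs_Mop_sub_Mop_div_le {R δ : ℝ} {ρ₁ ρ₂ : ℝ → ℝ} (h₁ : ContinuousOn ρ₁ (Icc 0 R))
    (h₂ : ContinuousOn ρ₂ (Icc 0 R)) (hρ : ∀ s ∈ Icc 0 R, |ρ₁ s - ρ₂ s| ≤ δ) {r : ℝ}
    (hr : r ∈ Ioc 0 R) :
    |(Mop ρ₁ r - Mop ρ₂ r) / r ^ 3| ≤ 4 * π / 3 * δ := by
  have hsub : uIcc 0 r ⊆ Icc 0 R := by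
    rw [uIcc_of_le hr.1.le]; exact Icc_subset_Icc_right hr.2
  have hr3 : 0 < r ^ 3 := pow_pos hr.1 3
  rw [Mop_sub_Mop (h₁.mono hsub) (h₂.mono hsub), abs_div, abs_of_pos hr3, div_le_iff₀ hr3]
  exact abs_Mop_le hr.1.le fun s hs => hρ s ⟨hs.1.le, hs.2.trans hr.2⟩

section Admissible

variable {R : ℝ} {m ρ m₁ ρ₁ m₂ ρ₂ : ℝ → ℝ}

lemma rho0R_le (hR₀ : 0 ≤ R) (hR : R ≤ 1 / 100) : rho0R R ≤ 1 / 100 := by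
  unfold rho0R
  nlinarith [pi_le_four, pi_pos, mul_le_mul hR hR hR₀ (by norm_num)]

lemma memC.density_mem (h : memC R m ρ) (hR : R ≤ 1 / 100) {s : ℝ} (hs : s ∈ Icc 0 R) :
    ρ s ∈ Icc (0 : ℝ) (1 / 100) := by
  obtain ⟨-, -, hρ₀, hρ⟩ := h.2.2 s hs
  exact ⟨hρ₀, hρ.trans (rho0R_le (hs.1.trans hs.2) hR)⟩

lemma memC.div_cube_mem (h : memC R m ρ) (hR : R ≤ 1 / 100) {s : ℝ} (hs : s ∈ Ioc 0 R) :
    m s / s ^ 3 ∈ Icc (0 : ℝ) (1 / 10) := by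
  obtain ⟨hm₀, hm, -, -⟩ := h.2.2 s (Ioc_subset_Icc_self hs)
  have hs3 : 0 < s ^ 3 := pow_pos hs.1 3
  have hρ₀ := rho0R_le (hs.1.le.trans hs.2) hR
  have hc : 4 * π / 3 * rho0R R ≤ 1 / 10 := by
    nlinarith [pi_le_four, pi_pos, (by unfold rho0R; positivity : 0 ≤ rho0R R)]
  exact ⟨div_nonneg hm₀ hs3.le, (div_le_iff₀ hs3).2 (hm.trans (mul_le_mul_of_nonneg_right hc hs3.le))⟩

lemma memC.continuousOn_pIntegrand (h : memC R m ρ) (hR : R ≤ 1 / 100) :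
    ContinuousOn (fun s => pIntegrand s (m s / s ^ 3) (ρ s)) (Ioc 0 R) := by
  have hρ : ContinuousOn ρ (Ioc 0 R) := h.2.1.mono Ioc_subset_Icc_self
  have ha : ContinuousOn (fun s => m s / s ^ 3) (Ioc 0 R) :=
    (h.1.mono Ioc_subset_Icc_self).div (continuousOn_pow 3) fun s hs => pow_ne_zero 3 hs.1.ne'
  unfold pIntegrand pQuotient pAffine
  refine ((ContinuousOn.div (by fun_prop) (by fun_prop) fun s hs => ?_).mul
    (by fun_prop)).mul (by fun_prop)
  have := half_le_pQuotient_denom ⟨hs.1.le, hs.2.trans hR⟩ (h.div_cube_mem hR hs)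
  linarith

lemma memC.intervalIntegrable_pIntegrand (h : memC R m ρ) (hR : R ≤ 1 / 100) {r : ℝ}
    (hr : r ∈ Icc 0 R) :
    IntervalIntegrable (fun s => pIntegrand s (m s / s ^ 3) (ρ s)) volume r R := by
  rw [intervalIntegrable_iff_integrableOn_Ioc_of_le hr.2]
  refine IntegrableOn.of_bound measure_Ioc_lt_top
    (((h.continuousOn_pIntegrand hR).mono (Ioc_subset_Ioc_left hr.1)).aestronglyMeasurable
      measurableSet_Ioc) 1 ((ae_restrict_iff' measurableSet_Ioc).2 (.of_forall fun s hs => ?_))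
  have hs' : s ∈ Ioc 0 R := Ioc_subset_Ioc_left hr.1 hs
  have hsI : s ∈ Icc (0 : ℝ) (1 / 100) := ⟨hs'.1.le, hs'.2.trans hR⟩
  rw [Real.norm_eq_abs]
  linarith [abs_pIntegrand_le hsI (h.div_cube_mem hR hs') (h.density_mem hR (Ioc_subset_Icc_self hs')),
    hsI.2]

lemma abs_Pop_sub_le (hR₀ : 0 < R) (hR : R ≤ 1 / 100) (h₁ : memC R m₁ ρ₁) (h₂ : memC R m₂ ρ₂)
    {δa δρ : ℝ} (ha : ∀ s ∈ Ioc 0 R, |(m₁ s - m₂ s) / s ^ 3| ≤ δa)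
    (hρ : ∀ s ∈ Ioc 0 R, |ρ₁ s - ρ₂ s| ≤ δρ) {r : ℝ} (hr : r ∈ Icc 0 R) :
    |Pop R m₁ ρ₁ r - Pop R m₂ ρ₂ r| ≤ 120 * R ^ 2 * (δa + δρ) := by
  have hδ : 0 ≤ δa + δρ := add_nonneg ((abs_nonneg _).trans (ha R ⟨hR₀, le_rfl⟩))
    ((abs_nonneg _).trans (hρ R ⟨hR₀, le_rfl⟩))
  have hpt : ∀ s ∈ uIoc r R, ‖pIntegrand s (m₁ s / s ^ 3) (ρ₁ s) - pIntegrand s (m₂ s / s ^ 3) (ρ₂ s)‖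
      ≤ 120 * R * (δa + δρ) := fun s hs => by
    rw [uIoc_of_le hr.2] at hs
    have hs' : s ∈ Ioc 0 R := Ioc_subset_Ioc_left hr.1 hs
    have hsI : s ∈ Icc (0 : ℝ) (1 / 100) := ⟨hs'.1.le, hs'.2.trans hR⟩
    refine (abs_pIntegrand_sub_le hsI (h₁.div_cube_mem hR hs') (h₂.div_cube_mem hR hs')
      (h₁.density_mem hR (Ioc_subset_Icc_self hs')) (h₂.density_mem hR (Ioc_subset_Icc_self hs'))).trans ?_
    rw [← sub_div]
    gcongr
    exacts [hs'.2, ha s hs', hρ s hs']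
  rw [Pop_eq_integral_pIntegrand, Pop_eq_integral_pIntegrand, ← intervalIntegral.integral_sub
    (h₁.intervalIntegrable_pIntegrand hR hr) (h₂.intervalIntegrable_pIntegrand hR hr),
    ← Real.norm_eq_abs]
  calc _ ≤ 120 * R * (δa + δρ) * |R - r| := intervalIntegral.norm_integral_le_of_norm_le_const hpt
    _ ≤ 120 * R * (δa + δρ) * R := by
        gcongr
        rw [abs_of_nonneg (sub_nonneg.2 hr.2)]
        linarith [hr.1]
    _ = 120 * R ^ 2 * (δa + δρ) := by ring

lemma memC.bddAbove_abs_sub_div_cube (h₁ : memC R m₁ ρ₁) (h₂ : memC R m₂ ρ₂) (hR : R ≤ 1 / 100) :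
    BddAbove ((fun r => |(m₁ r - m₂ r) / r ^ 3|) '' Ioc 0 R) := by
  refine ⟨1 / 10, forall_mem_image.2 fun r hr => ?_⟩
  obtain ⟨ha₁, ha₁'⟩ := h₁.div_cube_mem hR hr
  obtain ⟨ha₂, ha₂'⟩ := h₂.div_cube_mem hR hr
  rw [sub_div]
  exact abs_sub_le_of_nonneg_of_le ha₁ ha₁' ha₂ ha₂'

lemma memC.bddAbove_abs_sub (h₁ : memC R m₁ ρ₁) (h₂ : memC R m₂ ρ₂) (hR : R ≤ 1 / 100) :
    BddAbove ((fun r => |ρ₁ r - ρ₂ r|) '' Icc 0 R) := by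
  refine ⟨1 / 100, forall_mem_image.2 fun r hr => ?_⟩
  obtain ⟨hρ₁, hρ₁'⟩ := h₁.density_mem hR hr
  obtain ⟨hρ₂, hρ₂'⟩ := h₂.density_mem hR hr
  exact abs_sub_le_of_nonneg_of_le hρ₁ hρ₁' hρ₂ hρ₂'

end Admissible

lemma normCR_le {R A B : ℝ} {m ρ : ℝ → ℝ} (hR : 0 < R) (hm : ∀ r ∈ Ioc 0 R, |m r / r ^ 3| ≤ A)
    (hρ : ∀ r ∈ Icc 0 R, |ρ r| ≤ B) : normCR R m ρ ≤ 3 / (4 * π) * A + 2 * B := by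
  unfold normCR
  gcongr
  · exact csSup_le ((nonempty_Ioc.2 hR).image _) (forall_mem_image.2 hm)
  · exact csSup_le ((nonempty_Icc.2 hR.le).image _) (forall_mem_image.2 hρ)

/-- For all sufficiently small `R`, `T` is a `3/4`-contraction on `C_R^0`. -/
theorem stmt2 :
    ∃ Rstar : ℝ, 0 < Rstar ∧ Rstar ≤ 1 / 2 * Real.sqrt (3 / (4 * π)) ∧
    ∀ R : ℝ, 0 < R → R < Rstar →
      ∀ m₁ ρ₁ m₂ ρ₂ : ℝ → ℝ, memC R m₁ ρ₁ → memC R m₂ ρ₂ →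
        normCR R (fun r => Mop ρ₁ r - Mop ρ₂ r)
            (fun r => Pop R m₁ ρ₁ r - Pop R m₂ ρ₂ r) ≤
          3 / 4 * normCR R (fun r => m₁ r - m₂ r) (fun r => ρ₁ r - ρ₂ r) := by
  have hsqrt : (1 : ℝ) / 50 ≤ Real.sqrt (3 / (4 * π)) := by
    rw [Real.le_sqrt (by norm_num) (by positivity), le_div_iff₀ (by positivity)]
    nlinarith [pi_le_four]
  refine ⟨1 / 100, by norm_num, by linarith, ?_⟩
  intro R hR₀ hR m₁ ρ₁ m₂ ρ₂ h₁ h₂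
  set δa := sSup ((fun r => |(m₁ r - m₂ r) / r ^ 3|) '' Ioc 0 R)
  set δρ := sSup ((fun r => |ρ₁ r - ρ₂ r|) '' Icc 0 R)
  have ha : ∀ r ∈ Ioc 0 R, |(m₁ r - m₂ r) / r ^ 3| ≤ δa := fun r hr =>
    le_csSup (h₁.bddAbove_abs_sub_div_cube h₂ hR.le) (mem_image_of_mem _ hr)
  have hρ : ∀ r ∈ Icc 0 R, |ρ₁ r - ρ₂ r| ≤ δρ := fun r hr =>
    le_csSup (h₁.bddAbove_abs_sub h₂ hR.le) (mem_image_of_mem _ hr)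
  have hδa : 0 ≤ δa := (abs_nonneg _).trans (ha R ⟨hR₀, le_rfl⟩)
  have hδρ : 0 ≤ δρ := (abs_nonneg _).trans (hρ R ⟨hR₀.le, le_rfl⟩)
  calc _ ≤ 3 / (4 * π) * (4 * π / 3 * δρ) + 2 * (120 * R ^ 2 * (δa + δρ)) :=
        normCR_le hR₀ (fun r hr => abs_Mop_sub_Mop_div_le h₁.2.1 h₂.2.1 hρ hr)
          (fun r hr => abs_Pop_sub_le hR₀ hR.le h₁ h₂ ha
            (fun s hs => hρ s (Ioc_subset_Icc_self hs)) hr)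
    _ ≤ 3 / 4 * (3 / (4 * π) * δa + 2 * δρ) := by
        have hM : 3 / (4 * π) * (4 * π / 3 * δρ) = δρ := by field_simp
        have hπ : 9 / 64 ≤ 3 / 4 * (3 / (4 * π)) := by
          rw [show 3 / 4 * (3 / (4 * π)) = 9 / (16 * π) by ring]
          exact div_le_div_of_nonneg_left (by norm_num) (by positivity) (by linarith [pi_le_four])
        nlinarith [mul_le_mul_of_nonneg_right hπ hδa,
          mul_le_mul_of_nonneg_right (pow_le_pow_left₀ hR₀.le hR.le 2) (add_nonneg hδa hδρ)]

end
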